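/- arXiv:0912.0194 — 6 statements merged into one kernel-verified Lean document; each statement's English description precedes it below -/
import Mathlib

section
/- Let t > 0 and let α, β be real numbers with 0 ≤ β ≤ α. Then: (i) for every x ∈ ℝ, (4πt)^{-1/2}·∫_ℝ exp(−α|x| − (x−y)²/(4t) + β|y|) dy ≤ 2·exp(β²t); and (ii) for every y ∈ ℝ, (4πt)^{-1/2}·∫_ℝ exp(−α|x| − (x−y)²/(4t) + β|y|) dx ≤ 2·exp(α²t). -/
/-!
Writing `v = y - x`, the weights satisfy `-α|x| + β|y| ≤ β|v|` (triangle inequality and `β ≤ α`),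
so each row of the kernel is dominated by `exp (-v²/(4t) + β|v|) ≤ exp (-v²/(4t) + βv) + exp (-v²/(4t) - βv)`.
Completing the square turns each summand into `exp (β²t)` times a heat kernel centred at `±2βt`,
whose integral is `√(4πt)`. The columns are handled in the same way with `α` in place of `β`.
-/

open MeasureTheory Real

lemma integrable_exp_neg_sq_sub_div (s d : ℝ) (hs : 0 < s) :
    Integrable fun u : ℝ => exp (-(u - d) ^ 2 / (4 * s)) := by
  convert (integrable_exp_neg_mul_sq (by positivity : 0 < 1 / (4 * s))).comp_sub_right d
    using 2 with u
  field_simp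

lemma integral_exp_neg_sq_sub_div (s d : ℝ) (hs : 0 < s) :
    ∫ u : ℝ, exp (-(u - d) ^ 2 / (4 * s)) = sqrt (4 * π * s) := by
  have h : ∀ u : ℝ, exp (-(u - d) ^ 2 / (4 * s)) = exp (-(1 / (4 * s)) * (u - d) ^ 2) := by
    intro u; congr 1; field_simp
  simp_rw [h]
  rw [integral_sub_right_eq_self (fun v : ℝ => exp (-(1 / (4 * s)) * v ^ 2)) d,
    integral_gaussian]
  congr 1
  field_simp

lemma exp_neg_sq_div_add_mul (t c v : ℝ) (ht : t ≠ 0) :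
    exp (-v ^ 2 / (4 * t) + c * v) = exp (c ^ 2 * t) * exp (-(v - 2 * c * t) ^ 2 / (4 * t)) := by
  rw [← exp_add]
  congr 1
  field_simp
  ring

lemma exp_mul_abs_le (c v : ℝ) : exp (c * |v|) ≤ exp (c * v) + exp (c * -v) := by
  rcases abs_cases v with ⟨h, -⟩ | ⟨h, -⟩ <;> rw [h] <;> linarith [exp_pos (c * v), exp_pos (c * -v)]

lemma integral_le_of_le_exp_neg_sq_add_mul_abs (t c x₀ : ℝ) (ht : 0 < t) (f : ℝ → ℝ)
    (hf0 : ∀ u, 0 ≤ f u) (hf : ∀ u, f u ≤ exp (-(u - x₀) ^ 2 / (4 * t) + c * |u - x₀|)) :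
    (sqrt (4 * π * t))⁻¹ * ∫ u, f u ≤ 2 * exp (c ^ 2 * t) := by
  set g : ℝ → ℝ := fun u => exp (c ^ 2 * t) *
    (exp (-(u - (x₀ + 2 * c * t)) ^ 2 / (4 * t)) + exp (-(u - (x₀ - 2 * c * t)) ^ 2 / (4 * t)))
  have hg_int : Integrable g :=
    ((integrable_exp_neg_sq_sub_div t _ ht).add (integrable_exp_neg_sq_sub_div t _ ht)).const_mul _
  have hfg : ∀ u, f u ≤ g u := by
    intro u
    have hsplit := exp_mul_abs_le c (u - x₀)
    have hplus := exp_neg_sq_div_add_mul t c (u - x₀) ht.ne'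
    have hminus := exp_neg_sq_div_add_mul t (-c) (u - x₀) ht.ne'
    calc f u ≤ exp (-(u - x₀) ^ 2 / (4 * t)) * exp (c * |u - x₀|) := by rw [← exp_add]; exact hf u
      _ ≤ exp (-(u - x₀) ^ 2 / (4 * t)) * (exp (c * (u - x₀)) + exp (c * -(u - x₀))) := by
          gcongr
      _ = g u := by
          rw [mul_add, ← exp_add, ← exp_add, mul_neg, ← neg_mul, hplus, hminus]
          simp only [g]
          ring_nf
  have hg : ∫ u, g u = exp (c ^ 2 * t) * (2 * sqrt (4 * π * t)) := by
    rw [integral_const_mul, integral_add (integrable_exp_neg_sq_sub_div _ _ ht)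
      (integrable_exp_neg_sq_sub_div _ _ ht), integral_exp_neg_sq_sub_div _ _ ht,
      integral_exp_neg_sq_sub_div _ _ ht]
    ring
  have hs : 0 < sqrt (4 * π * t) := sqrt_pos.mpr (by positivity)
  calc (sqrt (4 * π * t))⁻¹ * ∫ u, f u
      ≤ (sqrt (4 * π * t))⁻¹ * ∫ u, g u :=
        mul_le_mul_of_nonneg_left (integral_mono_of_nonneg (.of_forall hf0) hg_int
          (.of_forall hfg)) (by positivity)
    _ = 2 * exp (c ^ 2 * t) := by rw [hg]; field_simp

lemma neg_mul_abs_add_mul_abs_le {a b : ℝ} (hb : 0 ≤ b) (hba : b ≤ a) (x y : ℝ) :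
    -a * |x| + b * |y| ≤ b * |y - x| ∧ -a * |x| + b * |y| ≤ a * |x - y| := by
  have hy : |y| ≤ |x| + |y - x| := by linarith [abs_sub_abs_le_abs_sub y x]
  have hxy : |y - x| = |x - y| := abs_sub_comm y x
  constructor <;> nlinarith [abs_nonneg x, abs_nonneg y]

/-- Schur-test row/column bounds for the weighted heat kernel
`(x,y) ↦ e^{−α|x|} k_t(x,y) e^{β|y|}` on the real line, `0 ≤ β ≤ α`, `t > 0`. -/
theorem stmt3 (t a b : ℝ) (ht : 0 < t) (hb : 0 ≤ b) (hba : b ≤ a) :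
    (∀ x : ℝ,
      (Real.sqrt (4 * Real.pi * t))⁻¹ *
          ∫ y : ℝ, Real.exp (-a * |x| - (x - y) ^ 2 / (4 * t) + b * |y|)
        ≤ 2 * Real.exp (b ^ 2 * t)) ∧
    (∀ y : ℝ,
      (Real.sqrt (4 * Real.pi * t))⁻¹ *
          ∫ x : ℝ, Real.exp (-a * |x| - (x - y) ^ 2 / (4 * t) + b * |y|)
        ≤ 2 * Real.exp (a ^ 2 * t)) := by
  have hweight := neg_mul_abs_add_mul_abs_le hb hba
  constructor
  · intro x
    refine integral_le_of_le_exp_neg_sq_add_mul_abs t b x ht _ (fun _ => (exp_pos _).le)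
      fun y => exp_le_exp.mpr ?_
    have hsq : -(y - x) ^ 2 / (4 * t) = -((x - y) ^ 2 / (4 * t)) := by ring
    linarith [(hweight x y).1]
  · intro y
    refine integral_le_of_le_exp_neg_sq_add_mul_abs t a y ht _ (fun _ => (exp_pos _).le)
      fun x => exp_le_exp.mpr ?_
    have hsq : -(x - y) ^ 2 / (4 * t) = -((x - y) ^ 2 / (4 * t)) := neg_div _ _
    linarith [(hweight x y).2]
end

section
/- Let t > 0 and let α, β be real numbers with 0 ≤ β < α. Then (4πt)^{-1}·∫_ℝ∫_ℝ exp(−2α|x| − (x−y)²/(2t) + 2β|y|) dx dy ≤ (2πt)^{-1/2}·(α−β)^{-1}·exp(2β²t); equivalently, the squared L²(ℝ×ℝ)-norm of the weighted kernel (x,y) ↦ e^{−α|x|} k_t(x,y) e^{β|y|} is at most (2πt)^{-1/2}(α−β)^{-1}e^{2β²t}. -/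
/-!
Since `b ≥ 0` and `|y| ≤ |x| + |y - x|`, the integrand is at most `e^{-2(a-b)|x|}` times the
Gaussian `e^{-(y-x)²/(2t)}` weighted by `e^{2b|y-x|} ≤ e^{2b(y-x)} + e^{-2b(y-x)}`. Completing the
square, each of the two resulting Gaussians has integral `√(2πt) e^{2b²t}` in `y`, and
`∫ e^{-2(a-b)|x|} dx = 1/(a-b)`.
-/

open MeasureTheory Real

lemma exp_mul_abs_le_add (c u : ℝ) : exp (c * |u|) ≤ exp (c * u) + exp (-c * u) := by
  rcases abs_choice u with h | h <;> rw [h]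
  · exact le_add_of_nonneg_right (exp_pos _).le
  · rw [mul_neg, ← neg_mul]
    exact le_add_of_nonneg_left (exp_pos _).le

section Gaussian

variable {t : ℝ}

lemma integral_exp_neg_sq_div_add_mul (ht : 0 < t) (c : ℝ) :
    ∫ u, exp (-u ^ 2 / (2 * t) + c * u) = √(2 * π * t) * exp (c ^ 2 * t / 2) := by
  have complete_square : ∀ u : ℝ,
      -u ^ 2 / (2 * t) + c * u = c ^ 2 * t / 2 + -(2 * t)⁻¹ * (u - c * t) ^ 2 := fun u => by
    field_simp
    ring
  simp_rw [complete_square, exp_add, integral_const_mul,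
    integral_sub_right_eq_self (fun v => exp (-(2 * t)⁻¹ * v ^ 2)), integral_gaussian,
    div_inv_eq_mul]
  ring_nf

-- The Bochner integral of a non-integrable function is `0`, so a nonzero value proves integrability.
lemma integrable_exp_neg_sq_div_add_mul (ht : 0 < t) (c : ℝ) :
    Integrable fun u => exp (-u ^ 2 / (2 * t) + c * u) :=
  .of_integral_ne_zero <| by rw [integral_exp_neg_sq_div_add_mul ht]; positivity

lemma exp_neg_sq_div_add_mul_abs_le (c u : ℝ) :
    exp (-u ^ 2 / (2 * t) + c * |u|)
      ≤ exp (-u ^ 2 / (2 * t) + c * u) + exp (-u ^ 2 / (2 * t) + -c * u) := by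
  simp_rw [exp_add, ← mul_add]
  exact mul_le_mul_of_nonneg_left (exp_mul_abs_le_add c u) (exp_pos _).le

lemma integrable_exp_neg_sq_div_add_mul_abs (ht : 0 < t) (c : ℝ) :
    Integrable fun u => exp (-u ^ 2 / (2 * t) + c * |u|) :=
  ((integrable_exp_neg_sq_div_add_mul ht c).add (integrable_exp_neg_sq_div_add_mul ht (-c))).mono'
    (by fun_prop) (.of_forall fun u => by
      rw [norm_of_nonneg (exp_pos _).le]; exact exp_neg_sq_div_add_mul_abs_le c u)

lemma integral_exp_neg_sq_div_add_mul_abs_le (ht : 0 < t) (c : ℝ) :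
    ∫ u, exp (-u ^ 2 / (2 * t) + c * |u|) ≤ 2 * √(2 * π * t) * exp (c ^ 2 * t / 2) :=
  calc ∫ u, exp (-u ^ 2 / (2 * t) + c * |u|)
      ≤ ∫ u, (exp (-u ^ 2 / (2 * t) + c * u) + exp (-u ^ 2 / (2 * t) + -c * u)) :=
        integral_mono (integrable_exp_neg_sq_div_add_mul_abs ht c)
          ((integrable_exp_neg_sq_div_add_mul ht c).add (integrable_exp_neg_sq_div_add_mul ht (-c)))
          (exp_neg_sq_div_add_mul_abs_le c)
    _ = 2 * √(2 * π * t) * exp (c ^ 2 * t / 2) := by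
        rw [integral_add (integrable_exp_neg_sq_div_add_mul ht c)
          (integrable_exp_neg_sq_div_add_mul ht (-c)), integral_exp_neg_sq_div_add_mul ht,
          integral_exp_neg_sq_div_add_mul ht, neg_sq]
        ring

end Gaussian

lemma integral_exp_neg_mul_abs {c : ℝ} (hc : 0 < c) : ∫ x, exp (-c * |x|) = 2 / c := by
  simp_rw [neg_mul]
  rw [integral_comp_abs (f := fun u => exp (-(c * u))),
    integral_comp_mul_left_Ioi (fun v => exp (-v)) 0 hc, mul_zero, integral_exp_neg_Ioi,
    neg_zero, exp_zero, smul_eq_mul, mul_one, div_eq_mul_inv]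

lemma integrable_exp_neg_mul_abs {c : ℝ} (hc : 0 < c) : Integrable fun x => exp (-c * |x|) :=
  .of_integral_ne_zero <| by rw [integral_exp_neg_mul_abs hc]; positivity

section WeightedHeatKernel

variable {t a b : ℝ}

lemma exp_weighted_heat_le_mul (hb : 0 ≤ b) (x y : ℝ) :
    exp (-2 * a * |x| - (x - y) ^ 2 / (2 * t) + 2 * b * |y|)
      ≤ exp (-(2 * (a - b)) * |x|) * exp (-(y - x) ^ 2 / (2 * t) + 2 * b * |y - x|) := by
  have triangle : |y| ≤ |x| + |y - x| := by linarith [abs_sub_abs_le_abs_sub y x]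
  have sq_comm : (x - y) ^ 2 = (y - x) ^ 2 := by ring
  rw [← exp_add, exp_le_exp, neg_div, sq_comm]
  nlinarith [mul_le_mul_of_nonneg_left triangle hb]

lemma integral_weighted_heat_le (ht : 0 < t) (hb : 0 ≤ b) (x : ℝ) :
    ∫ y, exp (-2 * a * |x| - (x - y) ^ 2 / (2 * t) + 2 * b * |y|)
      ≤ exp (-(2 * (a - b)) * |x|) * (2 * √(2 * π * t) * exp (2 * b ^ 2 * t)) :=
  calc ∫ y, exp (-2 * a * |x| - (x - y) ^ 2 / (2 * t) + 2 * b * |y|)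
      ≤ ∫ y, exp (-(2 * (a - b)) * |x|) * exp (-(y - x) ^ 2 / (2 * t) + 2 * b * |y - x|) :=
        integral_mono_of_nonneg (.of_forall fun _ => (exp_pos _).le)
          (((integrable_exp_neg_sq_div_add_mul_abs ht (2 * b)).comp_sub_right x).const_mul _)
          (.of_forall (exp_weighted_heat_le_mul hb x))
    _ = exp (-(2 * (a - b)) * |x|) * ∫ u, exp (-u ^ 2 / (2 * t) + 2 * b * |u|) := by
        rw [integral_const_mul,
          integral_sub_right_eq_self (fun u => exp (-u ^ 2 / (2 * t) + 2 * b * |u|)) x]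
    _ ≤ exp (-(2 * (a - b)) * |x|) * (2 * √(2 * π * t) * exp (2 * b ^ 2 * t)) := by
        gcongr
        exact (integral_exp_neg_sq_div_add_mul_abs_le ht (2 * b)).trans_eq (by congr 2; ring)

lemma integral_integral_weighted_heat_le (ht : 0 < t) (hb : 0 ≤ b) (hba : b < a) :
    ∫ x, ∫ y, exp (-2 * a * |x| - (x - y) ^ 2 / (2 * t) + 2 * b * |y|)
      ≤ (a - b)⁻¹ * (2 * √(2 * π * t) * exp (2 * b ^ 2 * t)) := by
  have hab : 0 < 2 * (a - b) := by linarith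
  calc ∫ x, ∫ y, exp (-2 * a * |x| - (x - y) ^ 2 / (2 * t) + 2 * b * |y|)
      ≤ ∫ x, exp (-(2 * (a - b)) * |x|) * (2 * √(2 * π * t) * exp (2 * b ^ 2 * t)) :=
        integral_mono_of_nonneg (.of_forall fun _ => integral_nonneg fun _ => (exp_pos _).le)
          ((integrable_exp_neg_mul_abs hab).mul_const _)
          (.of_forall (integral_weighted_heat_le ht hb))
    _ = (a - b)⁻¹ * (2 * √(2 * π * t) * exp (2 * b ^ 2 * t)) := by
        rw [integral_mul_const, integral_exp_neg_mul_abs hab, div_mul_cancel_left₀ two_ne_zero]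

end WeightedHeatKernel

/-- Hilbert–Schmidt (squared `L²`) bound for the weighted heat kernel
`(x,y) ↦ e^{−α|x|} k_t(x,y) e^{β|y|}` on the real line, `0 ≤ β < α`, `t > 0`. -/
theorem stmt4 (t a b : ℝ) (ht : 0 < t) (hb : 0 ≤ b) (hba : b < a) :
    (4 * Real.pi * t)⁻¹ *
        ∫ x : ℝ, ∫ y : ℝ, Real.exp (-2 * a * |x| - (x - y) ^ 2 / (2 * t) + 2 * b * |y|)
      ≤ (Real.sqrt (2 * Real.pi * t))⁻¹ * (a - b)⁻¹ * Real.exp (2 * b ^ 2 * t) := by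
  have hsq : √(2 * π * t) ^ 2 = 2 * π * t := sq_sqrt (by positivity)
  calc (4 * π * t)⁻¹ * ∫ x, ∫ y, exp (-2 * a * |x| - (x - y) ^ 2 / (2 * t) + 2 * b * |y|)
      ≤ (4 * π * t)⁻¹ * ((a - b)⁻¹ * (2 * √(2 * π * t) * exp (2 * b ^ 2 * t))) :=
        mul_le_mul_of_nonneg_left (integral_integral_weighted_heat_le ht hb hba) (by positivity)
    _ = (√(2 * π * t))⁻¹ * (a - b)⁻¹ * exp (2 * b ^ 2 * t) := by
        rw [show 4 * π * t = 2 * √(2 * π * t) ^ 2 by rw [hsq]; ring]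
        field_simp
end

section
/- Let n ≥ q ≥ 1 be integers and let f : ℝ^q → ℂ be continuous and rapidly decreasing on the positive orthant, i.e. for every N ∈ ℕ there is C_N ≥ 0 with |f(u)| ≤ C_N·(1+‖u‖)^{−N} whenever all coordinates of u are ≥ 0. Then lim_{t→∞} t^{2q}·∫_{S_n} f(t²σ₁, …, t²σ_q) dσ = (1/(n−q)!)·∫_{[0,∞)^q} f(u) du. -/
/-!
Write `S_m(r) = {y ∈ ℝ^m : y ≥ 0, ∑ y ≤ r}` (`solidSimplex m r`), of volume `r^m / m!`. Splitting
`ℝ^n = ℝ^q × ℝ^(n-q)`, the fibre of `S_n(r)` over `x ∈ S_q(r)` is `S_(n-q)(r - ∑ x)`, so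
`∫_{S_n(r)} g(σ₁,…,σ_q) = ∫_{S_q(r)} (r - ∑ x)^(n-q)/(n-q)! g(x) dx`. Substituting `u = t²σ`, the
quantity in the theorem becomes `∫_{S_q(t²)} (1 - ∑ u/t²)^(n-q)/(n-q)! f(u) du`. The weight is at
most `1/(n-q)!` and tends to it on the orthant, and the decay of `f` makes `f` integrable there,
so dominated convergence gives the limit.
-/

open MeasureTheory Set Filter Topology
open scoped Pointwise

section Fibers

variable {α β E : Type*} {A : Set α} {B : α → Set β}

open Classical in
lemma preimage_prodMk_setOf_fiber (x : α) :
    Prod.mk x ⁻¹' {p : α × β | p.1 ∈ A ∧ p.2 ∈ B p.1} = if x ∈ A then B x else ∅ := by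
  ext y; split_ifs with hx <;> simp [hx]

variable [MeasurableSpace α] [MeasurableSpace β] {μ : Measure α} {ν : Measure β}

lemma MeasureTheory.Measure.prod_apply_setOf_fiber [SFinite ν] (hA : MeasurableSet A)
    (hT : MeasurableSet {p : α × β | p.1 ∈ A ∧ p.2 ∈ B p.1}) :
    μ.prod ν {p | p.1 ∈ A ∧ p.2 ∈ B p.1} = ∫⁻ x in A, ν (B x) ∂μ := by
  rw [Measure.prod_apply hT, ← lintegral_indicator hA]
  congr 1 with x
  rw [preimage_prodMk_setOf_fiber]
  split_ifs with hx <;> simp [hx]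

lemma MeasureTheory.setIntegral_prod_setOf_fiber [NormedAddCommGroup E] [NormedSpace ℝ E]
    [CompleteSpace E] [SFinite μ] [SFinite ν] (hA : MeasurableSet A)
    (hT : MeasurableSet {p : α × β | p.1 ∈ A ∧ p.2 ∈ B p.1}) {g : α → E}
    (hg : IntegrableOn (fun p => g p.1) {p | p.1 ∈ A ∧ p.2 ∈ B p.1} (μ.prod ν)) :
    ∫ p in {p | p.1 ∈ A ∧ p.2 ∈ B p.1}, g p.1 ∂μ.prod ν
      = ∫ x in A, ν.real (B x) • g x ∂μ := by
  rw [← integral_indicator hT, integral_prod _ (hg.integrable_indicator hT),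
    ← integral_indicator hA]
  congr 1 with x
  change ∫ y, (Prod.mk x ⁻¹' {p : α × β | p.1 ∈ A ∧ p.2 ∈ B p.1}).indicator (fun _ => g x) y ∂ν
    = _
  rw [integral_indicator_const _ (measurable_prodMk_left hT), preimage_prodMk_setOf_fiber]
  split_ifs with hx <;> simp [hx]

end Fibers

def solidSimplex (m : ℕ) (r : ℝ) : Set (Fin m → ℝ) := {y | (∀ j, 0 ≤ y j) ∧ ∑ j, y j ≤ r}

namespace solidSimplex

lemma sum_nonneg {m : ℕ} {r : ℝ} {y : Fin m → ℝ} (hy : y ∈ solidSimplex m r) : 0 ≤ ∑ j, y j :=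
  Finset.sum_nonneg fun j _ => hy.1 j

lemma mono {m : ℕ} {r s : ℝ} (h : r ≤ s) : solidSimplex m r ⊆ solidSimplex m s :=
  fun _ hy => ⟨hy.1, hy.2.trans h⟩

lemma subset_pi_Icc (m : ℕ) (r : ℝ) : solidSimplex m r ⊆ univ.pi fun _ => Icc 0 r :=
  fun _ hy j _ =>
    ⟨hy.1 j, (Finset.single_le_sum (fun i _ => hy.1 i) (Finset.mem_univ j)).trans hy.2⟩

end solidSimplex

lemma isClosed_solidSimplex (m : ℕ) (r : ℝ) : IsClosed (solidSimplex m r) := by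
  simp only [solidSimplex, ofPred_and, ofPred_forall]
  exact (isClosed_iInter fun j => isClosed_le continuous_const (continuous_apply j)).inter
    (isClosed_le (continuous_finsetSum _ fun j _ => continuous_apply j) continuous_const)

lemma isCompact_solidSimplex (m : ℕ) (r : ℝ) : IsCompact (solidSimplex m r) :=
  (isCompact_univ_pi fun _ => isCompact_Icc).of_isClosed_subset (isClosed_solidSimplex m r)
    (solidSimplex.subset_pi_Icc m r)

lemma measurableSet_solidSimplex (m : ℕ) (r : ℝ) : MeasurableSet (solidSimplex m r) :=
  (isClosed_solidSimplex m r).measurableSet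

lemma solidSimplex_zero {r : ℝ} (hr : 0 ≤ r) : solidSimplex 0 r = univ := by
  ext y; simp [solidSimplex, hr]

lemma smul_solidSimplex (m : ℕ) {c : ℝ} (hc : 0 < c) (r : ℝ) :
    c • solidSimplex m r = solidSimplex m (c * r) := by
  ext y
  rw [mem_smul_set_iff_inv_smul_mem₀ hc.ne']
  simp only [solidSimplex, mem_ofPred_eq, Pi.smul_apply, smul_eq_mul, ← Finset.mul_sum]
  rw [inv_mul_le_iff₀ hc]
  simp only [mul_nonneg_iff_of_pos_left (inv_pos.2 hc)]

lemma solidSimplex_succ_eq_preimage (m : ℕ) (r : ℝ) :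
    solidSimplex (m + 1) r = MeasurableEquiv.piFinSuccAbove (fun _ => ℝ) 0 ⁻¹'
      {p | p.1 ∈ Icc 0 r ∧ p.2 ∈ solidSimplex m (r - p.1)} := by
  ext y
  simp only [solidSimplex, mem_preimage, mem_ofPred_eq, mem_Icc,
    MeasurableEquiv.piFinSuccAbove_apply, Fin.insertNthEquiv_symm_apply, Fin.forall_fin_succ,
    Fin.sum_univ_succ, Fin.succAbove_zero, Fin.removeNth]
  constructor
  · rintro ⟨⟨h0, hs⟩, hsum⟩
    have : 0 ≤ ∑ j : Fin m, y j.succ := Finset.sum_nonneg fun j _ => hs j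
    exact ⟨⟨h0, by linarith⟩, hs, by linarith⟩
  · rintro ⟨⟨h0, -⟩, hs, hsum⟩
    exact ⟨⟨h0, hs⟩, by linarith⟩

lemma integral_Icc_sub_pow_div_factorial (m : ℕ) {r : ℝ} (hr : 0 ≤ r) :
    ∫ x in Icc 0 r, (r - x) ^ m / m.factorial = r ^ (m + 1) / (m + 1).factorial := by
  rw [integral_Icc_eq_integral_Ioc, ← intervalIntegral.integral_of_le hr,
    intervalIntegral.integral_div, intervalIntegral.integral_comp_sub_left (fun x => x ^ m),
    sub_self, sub_zero, integral_pow, Nat.factorial_succ]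
  push_cast
  field_simp
  ring

lemma volume_solidSimplex (m : ℕ) {r : ℝ} (hr : 0 ≤ r) :
    volume (solidSimplex m r) = ENNReal.ofReal (r ^ m / m.factorial) := by
  induction m generalizing r with
  | zero => simp [solidSimplex_zero hr, volume_pi]
  | succ m ih =>
    set e := MeasurableEquiv.piFinSuccAbove (fun _ : Fin (m + 1) => ℝ) 0
    have hpre := solidSimplex_succ_eq_preimage m r
    have hT : MeasurableSet
        {p : ℝ × (Fin m → ℝ) | p.1 ∈ Icc 0 r ∧ p.2 ∈ solidSimplex m (r - p.1)} :=
      e.measurableSet_preimage.mp (hpre ▸ measurableSet_solidSimplex _ _)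
    rw [hpre, (volume_preserving_piFinSuccAbove (fun _ => ℝ) 0).measure_preimage
      hT.nullMeasurableSet, Measure.volume_eq_prod,
      Measure.prod_apply_setOf_fiber (B := fun x => solidSimplex m (r - x)) measurableSet_Icc hT,
      setLIntegral_congr_fun measurableSet_Icc (fun x hx => ih (sub_nonneg.2 hx.2)),
      ← ofReal_integral_eq_lintegral_ofReal, integral_Icc_sub_pow_div_factorial m hr]
    · exact (by fun_prop : Continuous fun x : ℝ => (r - x) ^ m / m.factorial).integrableOn_Icc
    · exact (ae_restrict_iff' measurableSet_Icc).2 (Eventually.of_forall fun x hx =>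
        div_nonneg (pow_nonneg (sub_nonneg.2 hx.2) m) (Nat.cast_nonneg _))

lemma measureReal_solidSimplex (m : ℕ) {r : ℝ} (hr : 0 ≤ r) :
    volume.real (solidSimplex m r) = r ^ m / m.factorial := by
  rw [measureReal_def, volume_solidSimplex m hr, ENNReal.toReal_ofReal (by positivity)]

def MeasurableEquiv.piFinAddProd (α : Type*) [MeasurableSpace α] (q m : ℕ) :
    (Fin (q + m) → α) ≃ᵐ (Fin q → α) × (Fin m → α) :=
  (MeasurableEquiv.piCongrLeft (fun _ => α) finSumFinEquiv).symm.trans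
    (MeasurableEquiv.sumPiEquivProdPi fun _ => α)

lemma MeasurableEquiv.piFinAddProd_apply {α : Type*} [MeasurableSpace α] {q m : ℕ}
    (σ : Fin (q + m) → α) :
    MeasurableEquiv.piFinAddProd α q m σ =
      (fun j => σ (Fin.castAdd m j), fun k => σ (Fin.natAdd q k)) := by
  ext <;> simp [MeasurableEquiv.piFinAddProd, MeasurableEquiv.trans,
    MeasurableEquiv.sumPiEquivProdPi, Equiv.sumPiEquivProdPi, MeasurableEquiv.piCongrLeft,
    Equiv.piCongrLeft_symm_apply]

lemma MeasureTheory.volume_preserving_piFinAddProd (α : Type*) [MeasureSpace α]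
    [SigmaFinite (volume : Measure α)] (q m : ℕ) :
    MeasurePreserving (MeasurableEquiv.piFinAddProd α q m) :=
  (volume_measurePreserving_sumPiEquivProdPi fun _ => α).comp
    (volume_measurePreserving_piCongrLeft (fun _ => α) finSumFinEquiv).symm

lemma solidSimplex_add_eq_preimage (q m : ℕ) (r : ℝ) :
    solidSimplex (q + m) r = MeasurableEquiv.piFinAddProd ℝ q m ⁻¹'
      {p | p.1 ∈ solidSimplex q r ∧ p.2 ∈ solidSimplex m (r - ∑ j, p.1 j)} := by
  ext σ
  simp only [solidSimplex, mem_preimage, mem_ofPred_eq, MeasurableEquiv.piFinAddProd_apply,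
    Fin.forall_fin_add, Fin.sum_univ_add]
  constructor
  · rintro ⟨⟨h1, h2⟩, hsum⟩
    have : 0 ≤ ∑ k : Fin m, σ (Fin.natAdd q k) := Finset.sum_nonneg fun k _ => h2 k
    exact ⟨⟨h1, by linarith⟩, h2, by linarith⟩
  · rintro ⟨⟨h1, -⟩, h2, hsum⟩
    exact ⟨⟨h1, h2⟩, by linarith⟩

lemma norm_one_sub_div_pow_div_factorial_le (m : ℕ) {s r : ℝ} (hs : 0 ≤ s) (hsr : s ≤ r) :
    ‖(1 - s / r) ^ m / m.factorial‖ ≤ (m.factorial : ℝ)⁻¹ := by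
  have h0 : 0 ≤ 1 - s / r := sub_nonneg.2 (div_le_one_of_le₀ hsr (hs.trans hsr))
  have h1 : 1 - s / r ≤ 1 := sub_le_self _ (div_nonneg hs (hs.trans hsr))
  rw [Real.norm_of_nonneg (by positivity), div_eq_inv_mul]
  exact mul_le_of_le_one_right (by positivity) (pow_le_one₀ h0 h1)

lemma measurableSet_orthant (q : ℕ) : MeasurableSet {u : Fin q → ℝ | ∀ j, 0 ≤ u j} :=
  measurableSet_Ici (a := (0 : Fin q → ℝ))

lemma integrableOn_of_norm_le_div_one_add_norm_pow {F E : Type*} [NormedAddCommGroup F]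
    [NormedSpace ℝ F] [FiniteDimensional ℝ F] [MeasurableSpace F] [BorelSpace F]
    {μ : Measure F} [μ.IsAddHaarMeasure] [NormedAddCommGroup E] {f : F → E} {s : Set F}
    (hs : MeasurableSet s) (hf : AEStronglyMeasurable f (μ.restrict s)) {C : ℝ}
    (hC : ∀ u ∈ s, ‖f u‖ ≤ C / (1 + ‖u‖) ^ (Module.finrank ℝ F + 1)) :
    IntegrableOn f s μ := by
  have hdom : Integrable (fun u : F => C * (1 + ‖u‖) ^ (-(Module.finrank ℝ F + 1 : ℝ))) μ :=
    (integrable_one_add_norm (by simp)).const_mul C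
  refine hdom.integrableOn.mono' hf ((ae_restrict_iff' hs).2 (Eventually.of_forall fun u hu => ?_))
  rw [Real.rpow_neg (by positivity), ← div_eq_mul_inv]
  exact_mod_cast hC u hu

section Integrals

variable {E : Type*} [NormedAddCommGroup E] [NormedSpace ℝ E]

lemma tendsto_setIntegral_solidSimplex_weight (q m : ℕ) {f : (Fin q → ℝ) → E}
    (hf : IntegrableOn f {u | ∀ j, 0 ≤ u j}) :
    Tendsto (fun r => ∫ u in solidSimplex q r, ((1 - (∑ j, u j) / r) ^ m / m.factorial) • f u)
      atTop (𝓝 ((m.factorial : ℝ)⁻¹ • ∫ u in {u | ∀ j, 0 ≤ u j}, f u)) := by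
  set F : ℝ → (Fin q → ℝ) → E := fun r => (solidSimplex q r).indicator
    fun u => ((1 - (∑ j, u j) / r) ^ m / m.factorial) • f u
  have hF : ∀ r, ∫ u in solidSimplex q r, ((1 - (∑ j, u j) / r) ^ m / m.factorial) • f u
      = ∫ u in {u | ∀ j, 0 ≤ u j}, F r u := fun r => by
    rw [setIntegral_indicator (measurableSet_solidSimplex q r),
      inter_eq_right.2 fun u hu => hu.1]
  simp_rw [hF, ← integral_smul]
  refine tendsto_integral_filter_of_dominated_convergence (fun u => (m.factorial : ℝ)⁻¹ * ‖f u‖)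
    (Eventually.of_forall fun r => ?_) (Eventually.of_forall fun r => ae_of_all _ fun u => ?_)
    (hf.norm.const_mul _) ((ae_restrict_iff' (measurableSet_orthant q)).2 <|
      Eventually.of_forall fun u hu => ?_)
  · exact ((by fun_prop : Continuous fun u : Fin q → ℝ =>
      (1 - (∑ j, u j) / r) ^ m / m.factorial).aestronglyMeasurable.smul
        hf.aestronglyMeasurable).indicator (measurableSet_solidSimplex q r)
  · simp only [F]
    by_cases hu : u ∈ solidSimplex q r
    · rw [indicator_of_mem hu, norm_smul]
      exact mul_le_mul_of_nonneg_right
        (norm_one_sub_div_pow_div_factorial_le m (solidSimplex.sum_nonneg hu) hu.2) (norm_nonneg _)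
    · rw [indicator_of_notMem hu, norm_zero]
      positivity
  · have hev : ∀ᶠ r in atTop, F r u = ((1 - (∑ j, u j) / r) ^ m / m.factorial) • f u :=
      (eventually_ge_atTop (∑ j, u j)).mono fun r hr =>
      indicator_of_mem (s := solidSimplex q r) ⟨hu, hr⟩ _
    refine Tendsto.congr' (EventuallyEq.symm hev) ?_
    have hlim : Tendsto (fun r : ℝ => (1 - (∑ j, u j) / r) ^ m / m.factorial) atTop
        (𝓝 ((1 - 0) ^ m / m.factorial)) :=
      ((tendsto_const_nhds.sub (tendsto_const_nhds.div_atTop tendsto_id)).pow m).div_const _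
    simpa using hlim.smul_const (f u)

lemma setIntegral_solidSimplex_comp_smul (m : ℕ) {c : ℝ} (hc : 0 < c) (r : ℝ)
    (g : (Fin m → ℝ) → E) :
    ∫ x in solidSimplex m r, g (c • x) = (c ^ m)⁻¹ • ∫ u in solidSimplex m (c * r), g u := by
  rw [Measure.setIntegral_comp_smul_of_pos _ _ _ hc, smul_solidSimplex m hc,
    Module.finrank_fin_fun]

variable [CompleteSpace E]

lemma setIntegral_solidSimplex_add (q m : ℕ) {r : ℝ} {g : (Fin q → ℝ) → E}
    (hg : IntegrableOn g (solidSimplex q r)) :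
    ∫ σ in solidSimplex (q + m) r, g (fun j => σ (Fin.castAdd m j))
      = ∫ x in solidSimplex q r, ((r - ∑ j, x j) ^ m / m.factorial) • g x := by
  set e := MeasurableEquiv.piFinAddProd ℝ q m
  set T := {p : (Fin q → ℝ) × (Fin m → ℝ) |
    p.1 ∈ solidSimplex q r ∧ p.2 ∈ solidSimplex m (r - ∑ j, p.1 j)}
  have hpre : solidSimplex (q + m) r = e ⁻¹' T := solidSimplex_add_eq_preimage q m r
  have hT : MeasurableSet T := e.measurableSet_preimage.mp (hpre ▸ measurableSet_solidSimplex _ _)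
  have hTsub : T ⊆ solidSimplex q r ×ˢ solidSimplex m r := fun p hp =>
    ⟨hp.1, solidSimplex.mono (sub_le_self _ (solidSimplex.sum_nonneg hp.1)) hp.2⟩
  have : IsFiniteMeasure (volume.restrict (solidSimplex m r)) :=
    isFiniteMeasure_restrict.2 (isCompact_solidSimplex m r).measure_lt_top.ne
  have hint : IntegrableOn (fun p => g p.1) T (volume.prod volume) := by
    refine IntegrableOn.mono_set ?_ hTsub
    rw [IntegrableOn, ← Measure.prod_restrict]
    exact hg.comp_fst _
  calc ∫ σ in solidSimplex (q + m) r, g (fun j => σ (Fin.castAdd m j))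
      = ∫ p in T, g p.1 ∂(volume.prod volume) := by
        rw [hpre, ← Measure.volume_eq_prod, ← (volume_preserving_piFinAddProd ℝ q m)
          |>.setIntegral_preimage_emb e.measurableEmbedding (fun p => g p.1)]
        simp only [e, MeasurableEquiv.piFinAddProd_apply]
    _ = ∫ x in solidSimplex q r, volume.real (solidSimplex m (r - ∑ j, x j)) • g x := by
        have hfiber := setIntegral_prod_setOf_fiber (μ := volume) (ν := volume) (g := g)
          (B := fun x => solidSimplex m (r - ∑ j, x j)) (measurableSet_solidSimplex q r) hT
        exact hfiber hint
    _ = _ := setIntegral_congr_fun (measurableSet_solidSimplex q r) fun x hx => by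
        rw [measureReal_solidSimplex m (sub_nonneg.2 hx.2)]

lemma pow_smul_setIntegral_solidSimplex_add (q m : ℕ) {c : ℝ} (hc : 0 < c)
    {f : (Fin q → ℝ) → E} (hf : IntegrableOn f (solidSimplex q c)) :
    c ^ q • ∫ σ in solidSimplex (q + m) 1, f (fun j => c * σ (Fin.castAdd m j))
      = ∫ u in solidSimplex q c, ((1 - (∑ j, u j) / c) ^ m / m.factorial) • f u := by
  have hscale := setIntegral_solidSimplex_comp_smul (q + m) hc 1
    (fun σ => f (fun j => σ (Fin.castAdd m j)))
  simp only [Pi.smul_apply, smul_eq_mul, mul_one] at hscale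
  rw [hscale, setIntegral_solidSimplex_add q m hf, smul_smul, ← integral_smul]
  congr 1 with u
  rw [smul_smul, one_sub_div hc.ne', div_pow, pow_add]
  field_simp

end Integrals

theorem stmt6_general (n q : ℕ) (hqn : q ≤ n)
    (f : (Fin q → ℝ) → ℂ) (hf : Continuous f)
    (hdec : ∀ N : ℕ, ∃ C : ℝ, 0 ≤ C ∧ ∀ u : Fin q → ℝ, (∀ j, 0 ≤ u j) →
      ‖f u‖ ≤ C / (1 + ‖u‖) ^ N) :
    Filter.Tendsto
      (fun t : ℝ => (t ^ (2 * q)) •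
        ∫ σ in {σ : Fin n → ℝ | (∀ j, 0 ≤ σ j) ∧ ∑ j, σ j ≤ 1},
          f (fun j => t ^ 2 * σ (Fin.castLE hqn j)))
      Filter.atTop
      (nhds ((((n - q).factorial : ℝ))⁻¹ •
        ∫ u in {u : Fin q → ℝ | ∀ j, 0 ≤ u j}, f u)) := by
  obtain ⟨m, rfl⟩ := Nat.exists_eq_add_of_le hqn
  obtain ⟨C, -, hC⟩ := hdec (Module.finrank ℝ (Fin q → ℝ) + 1)
  have hint : IntegrableOn f {u | ∀ j, 0 ≤ u j} :=
    integrableOn_of_norm_le_div_one_add_norm_pow (measurableSet_orthant q)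
      hf.aestronglyMeasurable hC
  rw [Nat.add_sub_cancel_left]
  refine ((tendsto_setIntegral_solidSimplex_weight q m hint).comp
    (tendsto_pow_atTop two_ne_zero)).congr' ?_
  filter_upwards [eventually_gt_atTop 0] with t ht
  rw [pow_mul]
  -- `Fin.castLE hqn` and `Fin.castAdd m` agree definitionally
  exact (pow_smul_setIntegral_solidSimplex_add q m (pow_pos ht 2)
    (hf.continuousOn.integrableOn_compact (isCompact_solidSimplex q _))).symm

/-- For `f : ℝ^q → ℂ` continuous and rapidly decreasing on the positive orthant and
`1 ≤ q ≤ n`, one has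
`lim_{t→∞} t^{2q} ∫_{Δ_n} f(t²σ₁,…,t²σ_q) dσ = (1/(n−q)!) ∫_{[0,∞)^q} f(u) du`,
where `Δ_n` is parametrized by `{σ ∈ ℝ^n : σ_j ≥ 0, σ₁+⋯+σ_n ≤ 1}`. -/
theorem stmt6 (n q : ℕ) (hq : 1 ≤ q) (hqn : q ≤ n)
    (f : (Fin q → ℝ) → ℂ) (hf : Continuous f)
    (hdec : ∀ N : ℕ, ∃ C : ℝ, 0 ≤ C ∧ ∀ u : Fin q → ℝ, (∀ j, 0 ≤ u j) →
      ‖f u‖ ≤ C / (1 + ‖u‖) ^ N) :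
    Filter.Tendsto
      (fun t : ℝ => (t ^ (2 * q)) •
        ∫ σ in {σ : Fin n → ℝ | (∀ j, 0 ≤ σ j) ∧ ∑ j, σ j ≤ 1},
          f (fun j => t ^ 2 * σ (Fin.castLE hqn j)))
      Filter.atTop
      (nhds ((((n - q).factorial : ℝ))⁻¹ •
        ∫ u in {u : Fin q → ℝ | ∀ j, 0 ≤ u j}, f u)) :=
  stmt6_general n q hqn f hf hdec
end

section
/- Let A be an associative (not necessarily commutative) ℂ-algebra, J ⊆ A a two-sided ideal, τ : J → ℂ a ℂ-linear hypertrace, i.e. τ(xa) = τ(ax) for all x ∈ J and a ∈ A, and let τ̄ : A → ℂ be any ℂ-linear map extending τ. Define μ̃ : A × A → ℂ by μ̃(a₀,a₁) = τ̄(a₀a₁ − a₁a₀). Then: (i) μ̃(a₀+x₀, a₁+x₁) = μ̃(a₀,a₁) for all a₀,a₁ ∈ A and x₀,x₁ ∈ J, so μ̃ descends to a bilinear map μ on the quotient algebra B = A/J; (ii) μ̃(a₁,a₀) = −μ̃(a₀,a₁); (iii) μ̃(a₀a₁, a₂) − μ̃(a₀, a₁a₂) + μ̃(a₂a₀, a₁)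 = 0 for all a₀,a₁,a₂ ∈ A. Consequently μ is a cyclic 1-cocycle on B, and the pair (τ̄, μ) is a relative cyclic 0-cocycle for the extension 0 → J → A → B → 0. -/
/-- Given a two-sided ideal `J` in a ℂ-algebra `A`, a hypertrace `τ` on `J`
(i.e. `τ(xa) = τ(ax)` for `x ∈ J`, `a ∈ A`) and a linear extension `τ̄` of it to
`A`, the bilinear map `μ̃(a₀,a₁) = τ̄([a₀,a₁])`: (i) is unchanged under
perturbing the arguments by elements of `J` (hence descends to `B = A/J`);
(ii) is antisymmetric; (iii) satisfies the Hochschild cocycle identity.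
Consequently it induces a cyclic 1-cocycle `μ` on `B` and `(τ̄, μ)` is a
relative cyclic 0-cocycle. -/
theorem stmt9 {A : Type*} [Ring A] [Algebra ℂ A]
    (J : Submodule ℂ A)
    (hJl : ∀ a : A, ∀ x ∈ J, a * x ∈ J)
    (hJr : ∀ a : A, ∀ x ∈ J, x * a ∈ J)
    (τ : A →ₗ[ℂ] ℂ)
    (hyper : ∀ x ∈ J, ∀ a : A, τ (x * a) = τ (a * x)) :
    (∀ a₀ a₁ : A, ∀ x₀ ∈ J, ∀ x₁ ∈ J,
      τ ((a₀ + x₀) * (a₁ + x₁) - (a₁ + x₁) * (a₀ + x₀)) = τ (a₀ * a₁ - a₁ * a₀)) ∧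
    (∀ a₀ a₁ : A, τ (a₁ * a₀ - a₀ * a₁) = - τ (a₀ * a₁ - a₁ * a₀)) ∧
    (∀ a₀ a₁ a₂ : A,
      τ (a₀ * a₁ * a₂ - a₂ * (a₀ * a₁)) - τ (a₀ * (a₁ * a₂) - a₁ * a₂ * a₀)
        + τ (a₂ * a₀ * a₁ - a₁ * (a₂ * a₀)) = 0) := by
  refine ⟨?_, ?_, ?_⟩
  · intro a₀ a₁ x₀ hx₀ x₁ hx₁
    have h1 := hyper x₀ hx₀ a₁
    have h2 := hyper x₁ hx₁ a₀
    have h3 := hyper x₀ hx₀ x₁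
    simp only [mul_add, add_mul, map_sub, map_add]
    linear_combination h1 - h2 + h3
  · intro a₀ a₁
    simp only [map_sub]
    ring
  · intro a₀ a₁ a₂
    simp only [map_sub, mul_assoc]
    ring
end

section
/- Let A be a complex unital Banach algebra and a, b ∈ A. Define iterated commutators by ∇⁰b = b and ∇^{j+1}b = a·(∇^j b) − (∇^j b)·a. Then for every t ∈ ℝ and every integer n ≥ 1, one has exp(−t·a)·b = Σ_{j=0}^{n−1} ((−t)^j / j!)·(∇^j b)·exp(−t·a) + ((−t)^n/(n−1)!)·∫₀¹ (1−s)^{n−1}·exp(−s·t·a)·(∇^n b)·exp(−(1−s)·t·a) ds. -/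
/-!
For `x, M` in a real Banach algebra, the path `s ↦ e^{sx} M e^{(1-s)x}` runs from `M e^x` to
`e^x M` and has derivative `e^{sx} [x, M] e^{(1-s)x}`, which gives the Duhamel formula
`e^x M - M e^x = ∫₀¹ e^{sx} [x, M] e^{(1-s)x} ds`. Integrating by parts against `(1-s)^n`
raises the order by one, so induction yields a Taylor expansion of `e^x M` in the iterated
commutators `ad_x^j M` with integral remainder. The theorem is the case `x = -t a`, where
`ad_x^j b = (-t)^j ∇^j b`.
-/

open scoped Nat
open NormedSpace

section

variable {A : Type*} [NormedRing A] [NormedAlgebra ℝ A]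

noncomputable def conjPath (x M : A) (s : ℝ) : A :=
  exp (s • x) * M * exp ((1 - s) • x)

theorem conjPath_zero (x M : A) : conjPath x M 0 = M * exp x := by
  simp [conjPath]

theorem conjPath_one (x M : A) : conjPath x M 1 = exp x * M := by
  simp [conjPath]

variable [CompleteSpace A]

theorem hasDerivAt_conjPath (x M : A) (s : ℝ) :
    HasDerivAt (conjPath x M) (conjPath x (x * M - M * x) s) s := by
  have hleft : HasDerivAt (fun s : ℝ => exp (s • x)) (exp (s • x) * x) s :=
    hasDerivAt_exp_smul_const x s
  have hright : HasDerivAt (fun s : ℝ => exp ((1 - s) • x)) (-(x * exp ((1 - s) • x))) s := by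
    simpa [Function.comp_def] using
      (hasDerivAt_exp_smul_const' x (1 - s)).scomp s ((hasDerivAt_id s).const_sub 1)
  refine ((hleft.mul_const M).mul hright).congr_deriv ?_
  simp only [conjPath]
  noncomm_ring

theorem continuous_conjPath (x M : A) : Continuous (conjPath x M) :=
  continuous_iff_continuousAt.2 fun s => (hasDerivAt_conjPath x M s).continuousAt

theorem exp_mul_sub_mul_exp_eq_integral_conjPath (x M : A) :
    exp x * M - M * exp x = ∫ s in (0 : ℝ)..1, conjPath x (x * M - M * x) s := by
  rw [intervalIntegral.integral_eq_sub_of_hasDerivAt (fun s _ => hasDerivAt_conjPath x M s)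
    ((continuous_conjPath _ _).intervalIntegrable 0 1), conjPath_one, conjPath_zero]

theorem integral_pow_smul_conjPath (x M : A) (n : ℕ) :
    (n + 1 : ℝ) • ∫ s in (0 : ℝ)..1, (1 - s) ^ n • conjPath x M s =
      M * exp x + ∫ s in (0 : ℝ)..1, (1 - s) ^ (n + 1) • conjPath x (x * M - M * x) s := by
  have hpow (s : ℝ) :
      HasDerivAt (fun s : ℝ => (1 - s) ^ (n + 1)) (-((n + 1 : ℝ) * (1 - s) ^ n)) s := by
    simpa using ((hasDerivAt_id' s).const_sub 1).fun_pow (n + 1)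
  have hparts := intervalIntegral.integral_smul_deriv_eq_deriv_smul (fun s _ => hpow s)
    (fun s _ => hasDerivAt_conjPath x M s)
    ((by fun_prop : Continuous fun s : ℝ => -((n + 1 : ℝ) * (1 - s) ^ n)).intervalIntegrable 0 1)
    ((continuous_conjPath _ _).intervalIntegrable 0 1)
  simp only [sub_self, zero_pow n.succ_ne_zero, zero_smul, sub_zero, one_pow, one_smul,
    conjPath_zero, neg_smul, mul_smul, intervalIntegral.integral_neg,
    intervalIntegral.integral_smul, zero_sub, sub_neg_eq_add] at hparts
  rw [hparts]
  abel

theorem exp_mul_eq_sum_add_integral_conjPath (x : A) (c : ℕ → A)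
    (hc : ∀ j, c (j + 1) = x * c j - c j * x) (n : ℕ) :
    exp x * c 0 =
      ∑ j ∈ Finset.range (n + 1), (j ! : ℝ)⁻¹ • (c j * exp x) +
        (n ! : ℝ)⁻¹ • ∫ s in (0 : ℝ)..1, (1 - s) ^ n • conjPath x (c (n + 1)) s := by
  induction n with
  | zero =>
    simp only [zero_add, Finset.sum_range_one, Nat.factorial_zero, Nat.cast_one, inv_one,
      one_smul, pow_zero]
    rw [hc, ← exp_mul_sub_mul_exp_eq_integral_conjPath]
    abel
  | succ n ih =>
    have hstep := integral_pow_smul_conjPath x (c (n + 1)) n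
    rw [← hc] at hstep
    have hfac : ((n + 1)! : ℝ)⁻¹ * (n + 1 : ℝ) = (n ! : ℝ)⁻¹ := by
      rw [Nat.factorial_succ, Nat.cast_mul]; push_cast; field_simp
    rw [ih, Finset.sum_range_succ _ (n + 1), ← hfac, mul_smul, hstep, smul_add, ← add_assoc]

end

theorem pow_smul_succ_eq_commutator {R A : Type*} [CommRing R] [Ring A] [Algebra R A]
    {a : A} {c : ℕ → A} (hc : ∀ j, c (j + 1) = a * c j - c j * a) (z : R) (j : ℕ) :
    z ^ (j + 1) • c (j + 1) = z • a * (z ^ j • c j) - z ^ j • c j * (z • a) := by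
  rw [hc, smul_mul_assoc, mul_smul_comm, smul_mul_assoc, mul_smul_comm, pow_succ]
  module

theorem conjPath_neg_ofReal_smul {A : Type*} [NormedRing A] [NormedAlgebra ℂ A]
    (a M : A) (t : ℝ) (w : ℂ) (s : ℝ) :
    conjPath ((-(t : ℂ)) • a) (w • M) s =
      w • (exp ((-(s * t : ℝ) : ℂ) • a) * M * exp ((-((1 - s) * t : ℝ) : ℂ) • a)) := by
  simp only [conjPath, ← Complex.coe_smul, smul_smul, mul_smul_comm, smul_mul_assoc]
  push_cast
  ring_nf

/-- Duhamel-type commutator expansion in a complex unital Banach algebra: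
with `∇⁰b = b`, `∇^{j+1}b = [a, ∇^j b]`, for every `t ∈ ℝ` and `n ≥ 1`,
`e^{−ta}·b = Σ_{j<n} ((−t)^j/j!) ∇^j b · e^{−ta}
  + ((−t)^n/(n−1)!) ∫₀¹ (1−s)^{n−1} e^{−sta} (∇^n b) e^{−(1−s)ta} ds`. -/
theorem stmt12 {A : Type*} [NormedRing A] [NormedAlgebra ℂ A] [CompleteSpace A]
    (a b : A) (c : ℕ → A) (hc0 : c 0 = b)
    (hcs : ∀ j, c (j + 1) = a * c j - c j * a) :
    ∀ t : ℝ, ∀ n : ℕ, 1 ≤ n →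
      NormedSpace.exp ((-(t : ℂ)) • a) * b =
        (∑ j ∈ Finset.range n,
          ((-(t : ℂ)) ^ j / (j.factorial : ℂ)) •
            (c j * NormedSpace.exp ((-(t : ℂ)) • a)))
        + ((-(t : ℂ)) ^ n / ((n - 1).factorial : ℂ)) •
            ∫ s in (0 : ℝ)..1, ((1 - s) ^ (n - 1)) •
              (NormedSpace.exp ((-(s * t : ℝ) : ℂ) • a) * c n *
                NormedSpace.exp ((-((1 - s) * t : ℝ) : ℂ) • a)) := by
  intro t n hn
  obtain ⟨m, rfl⟩ := Nat.exists_eq_add_of_le' hn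
  have expansion := exp_mul_eq_sum_add_integral_conjPath ((-(t : ℂ)) • a)
    (fun j => (-(t : ℂ)) ^ j • c j) (pow_smul_succ_eq_commutator hcs (-(t : ℂ))) m
  simp only [pow_zero, one_smul, hc0, conjPath_neg_ofReal_smul] at expansion
  rw [expansion, Nat.add_sub_cancel]
  congr 1
  · refine Finset.sum_congr rfl fun j _ => ?_
    rw [← Complex.coe_smul, smul_mul_assoc, smul_smul]
    push_cast
    ring_nf
  · simp_rw [smul_comm (_ : ℝ) ((-(t : ℂ)) ^ (m + 1)), intervalIntegral.integral_smul]
    rw [← Complex.coe_smul, smul_smul]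
    push_cast
    ring_nf
end

section
/- Let H be a finite-dimensional complex inner product space, D a self-adjoint endomorphism of H, and γ a self-adjoint endomorphism with γ² = id and γD = −Dγ. Let P denote the orthogonal projection of H onto ker D and fix t > 0. Then s ↦ D·exp((t/2 − s)·D²) is Bochner integrable on [t,∞), and setting A₀ = γ·D·exp(−(t/2)·D²) and A₁ = ∫_t^∞ D·exp((t/2 − s)·D²) ds, one has the commutator identity A₀·A₁ − A₁·A₀ = 2·γ·(exp(−t·D²) − P). In particular, Tr(γ·exp(−t·D²)) = Tr(γ·P) for every t > 0. -/
/-!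
Diagonalise `D` in an orthonormal eigenbasis. On an eigenvector with eigenvalue `a`, the operator
`A₀ = D e^{-tD²/2}` acts by `a e^{-ta²/2}` and `A₁` by `∫_t^∞ a e^{(t/2-s)a²} ds = e^{-ta²/2} / a`
(also right for `a = 0`, where both sides vanish since `x / 0 = 0`), so that
`A₀A₁ = A₁A₀ = e^{-tD²} - P`. As `γ` anticommutes with `D` and commutes with `D²`, it
anticommutes with the integrand and hence with `A₁`; therefore
`[γA₀, A₁] = γ(A₀A₁ + A₁A₀) = 2γ(e^{-tD²} - P)`, and a commutator has trace zero.
-/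

open MeasureTheory InnerProductSpace NormedSpace

theorem NormedSpace.exp_apply_of_apply_eq_smul {𝕜 E : Type*} [RCLike 𝕜] [NormedAddCommGroup E]
    [NormedSpace 𝕜 E] [CompleteSpace E] {A : E →L[𝕜] E} {x : E} {a : 𝕜} (h : A x = a • x) :
    exp A x = exp a • x := by
  have hpow (n : ℕ) : (A ^ n) x = a ^ n • x := by
    induction n with
    | zero => simp
    | succ n ih => rw [pow_succ, mul_apply_eq_comp, h, map_smul, ih, smul_smul, pow_succ']
  have hA := (exp_series_hasSum_exp' (𝕂 := 𝕜) A).mapL (ContinuousLinearMap.apply 𝕜 E x)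
  have ha := (exp_series_hasSum_exp' (𝕂 := 𝕜) a).smul_const x
  simp only [ContinuousLinearMap.apply_apply, smul_apply, hpow, smul_smul] at hA
  simp only [smul_eq_mul] at ha
  exact hA.unique ha

theorem mul_exp_smul_mul_self_mul_of_mul_eq_neg_mul {𝕂 𝔸 : Type*} [RCLike 𝕂] [NormedRing 𝔸]
    [NormedAlgebra 𝕂 𝔸] [CompleteSpace 𝔸] {a g : 𝔸} (h : g * a = -(a * g)) (c : 𝕂) :
    a * exp (c • (a * a)) * g = -(g * (a * exp (c • (a * a)))) := by
  have h' : a * g = -(g * a) := by rw [h, neg_neg]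
  have hsq : Commute (c • (a * a)) g := by
    refine .smul_left ?_ c
    change a * a * g = g * (a * a)
    rw [mul_assoc, h', mul_neg, ← mul_assoc, h', neg_mul, neg_neg, mul_assoc]
  rw [mul_assoc, hsq.exp_left.eq, ← mul_assoc, h', neg_mul, mul_assoc]

theorem integral_mul_eq_neg_mul_integral {α A : Type*} [MeasurableSpace α] {μ : Measure α}
    [NormedRing A] [NormedSpace ℝ A] [IsScalarTower ℝ A A] [SMulCommClass ℝ A A] {f : α → A}
    (hf : Integrable f μ) {c : A} (h : ∀ x, f x * c = -(c * f x)) :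
    (∫ x, f x ∂μ) * c = -(c * ∫ x, f x ∂μ) := by
  rw [← integral_mul_const_of_integrable hf, ← integral_const_mul_of_integrable hf, ← integral_neg]
  simp_rw [h]

theorem ContinuousLinearMap.trace_eq_zero_of_mul_sub_mul_eq_smul {𝕜 E : Type*} [RCLike 𝕜]
    [NormedAddCommGroup E] [NormedSpace 𝕜 E] [FiniteDimensional 𝕜 E] {X Y Z : E →L[𝕜] E}
    {c : 𝕜} (hc : c ≠ 0) (h : X * Y - Y * X = c • Z) :
    LinearMap.trace 𝕜 E (Z : E →ₗ[𝕜] E) = 0 := by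
  have := congrArg (fun T : E →L[𝕜] E => LinearMap.trace 𝕜 E (T : E →ₗ[𝕜] E)) h
  simpa [LinearMap.trace_mul_comm, hc] using this

theorem mul_exp_sub_mul_sq_eq (a u s : ℝ) :
    a * Real.exp ((u - s) * a ^ 2) = a * Real.exp (u * a ^ 2) * Real.exp (-a ^ 2 * s) := by
  rw [mul_assoc, ← Real.exp_add]
  ring_nf

theorem integrableOn_Ici_mul_exp_sub_mul_sq (a u t : ℝ) :
    IntegrableOn (fun s => a * Real.exp ((u - s) * a ^ 2)) (Set.Ici t) := by
  rcases eq_or_ne a 0 with rfl | ha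
  · simp
  simp_rw [mul_exp_sub_mul_sq_eq a u]
  exact ((integrableOn_Ici_iff_integrableOn_Ioi).mpr
    (exp_neg_integrableOn_Ioi t (by positivity))).const_mul _

theorem integral_Ici_mul_exp_sub_mul_sq (a u t : ℝ) :
    ∫ s in Set.Ici t, a * Real.exp ((u - s) * a ^ 2) = Real.exp ((u - t) * a ^ 2) / a := by
  rcases eq_or_ne a 0 with rfl | ha
  · simp
  simp_rw [mul_exp_sub_mul_sq_eq a u, integral_const_mul, integral_Ici_eq_integral_Ioi,
    integral_exp_mul_Ioi (neg_neg_of_pos (by positivity : 0 < a ^ 2))]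
  rw [sub_mul, Real.exp_sub]
  field_simp
  rw [← Real.exp_add, neg_add_cancel, Real.exp_zero]

theorem exp_div_mul_mul_exp (a t : ℝ) :
    Real.exp (-(t / 2) * a ^ 2) / a * (a * Real.exp (-(t / 2) * a ^ 2)) =
      Real.exp (-t * a ^ 2) - if a = 0 then 1 else 0 := by
  split_ifs with ha
  · simp [ha]
  rw [sub_zero, div_mul_eq_mul_div, mul_div_assoc, mul_div_cancel_left₀ _ ha, ← Real.exp_add]
  ring_nf

section OrthonormalBasis

variable {𝕜 E ι : Type*} [RCLike 𝕜] [NormedAddCommGroup E] [InnerProductSpace 𝕜 E] [Fintype ι]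
  (b : OrthonormalBasis ι 𝕜 E)

theorem OrthonormalBasis.eq_sum_smul_rankOne {F : E →L[𝕜] E} {c : ι → 𝕜}
    (hF : ∀ i, F (b i) = c i • b i) : F = ∑ i, c i • rankOne 𝕜 (b i) (b i) := by
  ext x
  conv_lhs => rw [← b.sum_repr' x]
  simp [hF, smul_smul, mul_comm]

theorem OrthonormalBasis.continuousLinearMap_ext {F G : E →L[𝕜] E} (h : ∀ i, F (b i) = G (b i)) :
    F = G :=
  ContinuousLinearMap.coe_injective (b.toBasis.ext fun i => by simpa using h i)

variable {α : Type*} [MeasurableSpace α] {μ : Measure α} {f : α → E →L[𝕜] E} {g : ι → α → 𝕜}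

theorem OrthonormalBasis.integrable_of_apply_eq_smul (hf : ∀ s i, f s (b i) = g i s • b i)
    (hg : ∀ i, Integrable (g i) μ) : Integrable f μ := by
  rw [funext fun s => b.eq_sum_smul_rankOne (hf s)]
  exact integrable_finsetSum (f := fun i s => g i s • rankOne 𝕜 (b i) (b i)) _
    fun i _ => (hg i).smul_const _

theorem OrthonormalBasis.integral_apply_of_apply_eq_smul [NormedSpace ℝ E] [IsScalarTower ℝ 𝕜 E]
    [CompleteSpace E] (hf : ∀ s i, f s (b i) = g i s • b i) (hg : ∀ i, Integrable (g i) μ)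
    (i : ι) : (∫ s, f s ∂μ) (b i) = (∫ s, g i s ∂μ) • b i := by
  rw [ContinuousLinearMap.integral_apply (b.integrable_of_apply_eq_smul hf hg)]
  simp_rw [hf]
  exact integral_smul_const _ _

end OrthonormalBasis

section Eigenvector

variable {𝕜 E : Type*} [RCLike 𝕜] [NormedAddCommGroup E] [InnerProductSpace 𝕜 E]
  {D : E →L[𝕜] E} {x : E} {a : ℝ}

theorem exp_smul_mul_self_apply_of_apply_eq_smul [CompleteSpace E] (hx : D x = (a : 𝕜) • x)
    (r : ℝ) : exp ((r : 𝕜) • (D * D)) x = (Real.exp (r * a ^ 2) : 𝕜) • x := by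
  have hsq : ((r : 𝕜) • (D * D)) x = ((r * a ^ 2 : ℝ) : 𝕜) • x := by
    rw [smul_apply, mul_apply_eq_comp, hx, map_smul, hx, smul_smul, smul_smul]
    push_cast
    ring_nf
  rw [exp_apply_of_apply_eq_smul hsq, Real.exp_eq_exp_ℝ]
  exact congrArg (· • x) (map_exp (algebraMap ℝ 𝕜) (continuous_algebraMap _ _) _).symm

theorem mul_exp_smul_mul_self_apply_of_apply_eq_smul [CompleteSpace E] (hx : D x = (a : 𝕜) • x)
    (r : ℝ) :
    (D * exp ((r : 𝕜) • (D * D))) x = ((a * Real.exp (r * a ^ 2) : ℝ) : 𝕜) • x := by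
  rw [mul_apply_eq_comp, exp_smul_mul_self_apply_of_apply_eq_smul hx, map_smul, hx, smul_smul]
  push_cast
  ring_nf

theorem starProjection_ker_apply_of_apply_eq_smul [CompleteSpace E]
    (hD : (D : E →ₗ[𝕜] E).IsSymmetric) {x : E} {a : 𝕜} (hx : D x = a • x) :
    (LinearMap.ker (D : E →ₗ[𝕜] E)).starProjection x = if a = 0 then x else 0 := by
  split_ifs with ha
  · rw [Submodule.starProjection_eq_self_iff, LinearMap.mem_ker]
    simp [hx, ha]
  · rw [Submodule.starProjection_apply_eq_zero_iff]
    intro y hy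
    have hDy : D y = 0 := hy
    simpa [hDy, hx, inner_smul_right, ha] using hD y x

theorem exp_smul_mul_self_sub_starProjection_ker_apply_of_apply_eq_smul [CompleteSpace E]
    (hD : (D : E →ₗ[𝕜] E).IsSymmetric) (hx : D x = (a : 𝕜) • x) (r : ℝ) :
    (exp ((r : 𝕜) • (D * D)) - (LinearMap.ker (D : E →ₗ[𝕜] E)).starProjection) x =
      ((Real.exp (r * a ^ 2) - if a = 0 then 1 else 0 : ℝ) : 𝕜) • x := by
  rw [sub_apply, exp_smul_mul_self_apply_of_apply_eq_smul hx,
    starProjection_ker_apply_of_apply_eq_smul hD hx]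
  split_ifs <;> simp_all

end Eigenvector

section HeatIntegral

variable {𝕜 E ι : Type*} [RCLike 𝕜] [NormedAddCommGroup E] [InnerProductSpace 𝕜 E]
  [CompleteSpace E] [Fintype ι] {D : E →L[𝕜] E} (b : OrthonormalBasis ι 𝕜 E) {μ : ι → ℝ}

theorem integrableOn_Ici_mul_exp_smul_mul_self (hb : ∀ i, D (b i) = (μ i : 𝕜) • b i) (u t : ℝ) :
    IntegrableOn (fun s : ℝ => D * exp (((u - s : ℝ) : 𝕜) • (D * D))) (Set.Ici t) :=
  b.integrable_of_apply_eq_smul (fun _ i => mul_exp_smul_mul_self_apply_of_apply_eq_smul (hb i) _)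
    fun _ => (integrableOn_Ici_mul_exp_sub_mul_sq _ _ _).ofReal

theorem integral_Ici_mul_exp_smul_mul_self_apply [NormedSpace ℝ E] [IsScalarTower ℝ 𝕜 E]
    (hb : ∀ i, D (b i) = (μ i : 𝕜) • b i) (u t : ℝ) (i : ι) :
    (∫ s in Set.Ici t, D * exp (((u - s : ℝ) : 𝕜) • (D * D))) (b i) =
      ((Real.exp ((u - t) * μ i ^ 2) / μ i : ℝ) : 𝕜) • b i := by
  rw [b.integral_apply_of_apply_eq_smul
    (fun _ i => mul_exp_smul_mul_self_apply_of_apply_eq_smul (hb i) _)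
    (fun _ => (integrableOn_Ici_mul_exp_sub_mul_sq _ _ _).ofReal), integral_ofReal,
    integral_Ici_mul_exp_sub_mul_sq]

end HeatIntegral

theorem stmt13_general {H : Type*} [NormedAddCommGroup H] [InnerProductSpace ℂ H]
    [FiniteDimensional ℂ H]
    (D γ P : H →L[ℂ] H)
    (hD : IsSelfAdjoint D)
    (hanti : γ * D = - (D * γ))
    (hP : ∀ x : H, P x = ((LinearMap.ker (D : H →ₗ[ℂ] H)).orthogonalProjectionOnto x : H))
    (t : ℝ) :
    IntegrableOn
      (fun s : ℝ => D * NormedSpace.exp (((t / 2 - s : ℝ) : ℂ) • (D * D)))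
      (Set.Ici t) volume ∧
    (γ * (D * NormedSpace.exp (((-(t / 2) : ℝ) : ℂ) • (D * D)))) *
        (∫ s in Set.Ici t, D * NormedSpace.exp (((t / 2 - s : ℝ) : ℂ) • (D * D))) -
      (∫ s in Set.Ici t, D * NormedSpace.exp (((t / 2 - s : ℝ) : ℂ) • (D * D))) *
        (γ * (D * NormedSpace.exp (((-(t / 2) : ℝ) : ℂ) • (D * D)))) =
      (2 : ℂ) • (γ * (NormedSpace.exp (((-t : ℝ) : ℂ) • (D * D)) - P)) ∧
    LinearMap.trace ℂ H
        ((γ * NormedSpace.exp (((-t : ℝ) : ℂ) • (D * D)) : H →L[ℂ] H) : H →ₗ[ℂ] H) =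
      LinearMap.trace ℂ H ((γ * P : H →L[ℂ] H) : H →ₗ[ℂ] H) := by
  replace hP : P = (LinearMap.ker (D : H →ₗ[ℂ] H)).starProjection := ContinuousLinearMap.ext hP
  have hsymm := hD.isSymmetric
  set b := hsymm.eigenvectorBasis rfl
  set μ := hsymm.eigenvalues rfl
  have hb (i) : D (b i) = ((μ i : ℝ) : ℂ) • b i := hsymm.apply_eigenvectorBasis rfl i
  set A₀ := D * exp (((-(t / 2) : ℝ) : ℂ) • (D * D))
  set A₁ := ∫ s in Set.Ici t, D * exp (((t / 2 - s : ℝ) : ℂ) • (D * D))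
  set E := exp (((-t : ℝ) : ℂ) • (D * D))
  have hA₀ (i) : A₀ (b i) = ((μ i * Real.exp (-(t / 2) * μ i ^ 2) : ℝ) : ℂ) • b i :=
    mul_exp_smul_mul_self_apply_of_apply_eq_smul (hb i) _
  have hA₁ (i) : A₁ (b i) = ((Real.exp (-(t / 2) * μ i ^ 2) / μ i : ℝ) : ℂ) • b i := by
    have := integral_Ici_mul_exp_smul_mul_self_apply b hb (t / 2) t i
    rwa [show t / 2 - t = -(t / 2) by ring] at this
  have hE (i) :
      (E - P) (b i) = ((Real.exp (-t * μ i ^ 2) - if μ i = 0 then 1 else 0 : ℝ) : ℂ) • b i :=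
    hP ▸ exp_smul_mul_self_sub_starProjection_ker_apply_of_apply_eq_smul hsymm (hb i) _
  have hA₀A₁ : A₀ * A₁ = E - P := b.continuousLinearMap_ext fun i => by
    rw [mul_apply_eq_comp, hA₁, map_smul, hA₀, smul_smul, hE, ← Complex.ofReal_mul,
      exp_div_mul_mul_exp]
  have hA₁A₀ : A₁ * A₀ = E - P := b.continuousLinearMap_ext fun i => by
    rw [mul_apply_eq_comp, hA₀, map_smul, hA₁, smul_smul, hE, ← Complex.ofReal_mul, mul_comm,
      exp_div_mul_mul_exp]
  have hint := integrableOn_Ici_mul_exp_smul_mul_self b hb (t / 2) t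
  have hA₁γ : A₁ * γ = -(γ * A₁) := integral_mul_eq_neg_mul_integral hint
    fun _ => mul_exp_smul_mul_self_mul_of_mul_eq_neg_mul hanti _
  have hcomm : γ * A₀ * A₁ - A₁ * (γ * A₀) = (2 : ℂ) • (γ * (E - P)) := by
    rw [mul_assoc γ A₀ A₁, ← mul_assoc A₁ γ A₀, hA₁γ, neg_mul, mul_assoc γ A₁ A₀, hA₀A₁, hA₁A₀,
      sub_neg_eq_add, two_smul]
  refine ⟨hint, hcomm, ?_⟩
  have := ContinuousLinearMap.trace_eq_zero_of_mul_sub_mul_eq_smul two_ne_zero hcomm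
  rwa [mul_sub, ContinuousLinearMap.toLinearMap_sub, map_sub, sub_eq_zero] at this

/-- McKean–Singer in finite dimensions: for a self-adjoint `D`, a grading `γ`
(`γ² = 1`, `γD = −Dγ`) and `P` the orthogonal projection onto `ker D`, for
`t > 0` the map `s ↦ D·e^{(t/2−s)D²}` is integrable on `[t,∞)`, and with
`A₀ = γ·D·e^{−(t/2)D²}`, `A₁ = ∫_t^∞ D·e^{(t/2−s)D²} ds` one has
`[A₀,A₁] = 2γ(e^{−tD²} − P)`; in particular `Tr(γe^{−tD²}) = Tr(γP)`. -/
theorem stmt13 {H : Type*} [NormedAddCommGroup H] [InnerProductSpace ℂ H]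
    [FiniteDimensional ℂ H]
    (D γ P : H →L[ℂ] H)
    (hD : IsSelfAdjoint D) (hγsa : IsSelfAdjoint γ) (hγ2 : γ * γ = 1)
    (hanti : γ * D = - (D * γ))
    (hP : ∀ x : H, P x = ((LinearMap.ker (D : H →ₗ[ℂ] H)).orthogonalProjectionOnto x : H))
    (t : ℝ) (ht : 0 < t) :
    IntegrableOn
      (fun s : ℝ => D * NormedSpace.exp (((t / 2 - s : ℝ) : ℂ) • (D * D)))
      (Set.Ici t) volume ∧
    (γ * (D * NormedSpace.exp (((-(t / 2) : ℝ) : ℂ) • (D * D)))) *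
        (∫ s in Set.Ici t, D * NormedSpace.exp (((t / 2 - s : ℝ) : ℂ) • (D * D))) -
      (∫ s in Set.Ici t, D * NormedSpace.exp (((t / 2 - s : ℝ) : ℂ) • (D * D))) *
        (γ * (D * NormedSpace.exp (((-(t / 2) : ℝ) : ℂ) • (D * D)))) =
      (2 : ℂ) • (γ * (NormedSpace.exp (((-t : ℝ) : ℂ) • (D * D)) - P)) ∧
    LinearMap.trace ℂ H
        ((γ * NormedSpace.exp (((-t : ℝ) : ℂ) • (D * D)) : H →L[ℂ] H) : H →ₗ[ℂ] H) =
      LinearMap.trace ℂ H ((γ * P : H →L[ℂ] H) : H →ₗ[ℂ] H) :=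
  stmt13_general D γ P hD hanti hP t
end
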